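/- arXiv:1902.02032 — 2 statements merged into one kernel-verified Lean document; each statement's English description precedes it below -/
import Mathlib

section
/- Let u_h : ℝ² → ℝ² and u₃ : ℝ² → ℝ be smooth away from the origin with |u_h(x)| ≤ C|x|^{1/3} and |u₃(x)| ≤ C|x|^{1/3} near 0, |∇u_h|, |∇u₃| ≤ C|x|^{-2/3} near 0, with u_h divergence-free and all fields decaying suitably at infinity. Then ∫ u_h · (∇u_h · u_h + ∇u₃ · u₃) dx = lim_{ε→0} ∫_{∂B(0,ε)} ½ (u_h · N)(|u_h|² + |u₃|²) dσ = 0, where N is the outward unit normal on ∂B(0,ε). -/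
open MeasureTheory Real Filter RealInnerProductSpace
open scoped Topology ENNReal NNReal

noncomputable section

local notation "E2" => EuclideanSpace ℝ (Fin 2)

namespace Stmt5Aux

instance : PartialOrder (EuclideanSpace ℝ (Fin 2)) :=
  PartialOrder.lift (fun x : EuclideanSpace ℝ (Fin 2) => WithLp.ofLp x) (WithLp.ofLp_injective 2)

lemma coord_le_norm (v : E2) (i : Fin 2) : |v i| ≤ ‖v‖ := by
  rw [EuclideanSpace.norm_eq]
  have h1 : |v i| = Real.sqrt (‖v i‖ ^ 2) := by
    rw [Real.sqrt_sq_eq_abs, Real.norm_eq_abs, abs_abs]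
  rw [h1]
  apply Real.sqrt_le_sqrt
  exact Finset.single_le_sum (f := fun j => ‖v j‖ ^ 2)
    (fun j _ => by positivity) (Finset.mem_univ i)

lemma sphere_haus_le (ε : ℝ) (hε : 0 ≤ ε) :
    μH[1] (Metric.sphere (0 : E2) ε) ≤ ENNReal.ofReal (ε * (2 * π)) := by
  set v : OrthonormalBasis (Fin 2) ℝ E2 := EuclideanSpace.basisFun (Fin 2) ℝ
  set L : ℂ ≃ₗᵢ[ℝ] E2 := Complex.isometryOfOrthonormal v
  have himg : Metric.sphere (0 : E2) ε = ⇑L '' Metric.sphere (0 : ℂ) ε := by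
    have := L.toIsometryEquiv.image_sphere (0 : ℂ) ε
    rw [show ⇑L.toIsometryEquiv = ⇑L from rfl] at this
    rw [this, map_zero]
  have hC : Metric.sphere (0 : ℂ) ε = circleMap 0 ε '' Set.Icc 0 (0 + 2 * π) := by
    rw [(periodic_circleMap 0 ε).image_Icc Real.two_pi_pos 0, range_circleMap, abs_of_nonneg hε]
  rw [himg, L.isometry.hausdorffMeasure_image (Or.inl zero_le_one), hC]
  calc μH[1] (circleMap 0 ε '' Set.Icc 0 (0 + 2 * π))
      ≤ (Real.nnabs ε : ℝ≥0∞) ^ (1 : ℝ) * μH[1] (Set.Icc 0 (0 + 2 * π)) :=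
        (lipschitzWith_circleMap 0 ε).hausdorffMeasure_image_le zero_le_one _
    _ = ENNReal.ofReal (ε * (2 * π)) := by
        rw [MeasureTheory.hausdorffMeasure_real, ENNReal.rpow_one, Real.volume_Icc]
        rw [show ((Real.nnabs ε : ℝ≥0) : ℝ≥0∞) = ENNReal.ofReal ε by
          rw [ENNReal.ofReal]; congr 1; ext <;> simp [abs_of_nonneg hε, hε]]
        rw [← ENNReal.ofReal_mul hε]
        ring_nf

end Stmt5Aux

set_option maxHeartbeats 1000000 in
/-- For 2½-dimensional Euler flow with exactly `C^{1/3}` regularity at the origin,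
the energy-flux term vanishes: the volume integral equals the limit of the boundary
flux integrals over small circles, and both are zero. -/
theorem stmt5 (uh : EuclideanSpace ℝ (Fin 2) → EuclideanSpace ℝ (Fin 2))
    (u3 : EuclideanSpace ℝ (Fin 2) → ℝ) (C r0 : ℝ) (hC : 0 < C) (hr0 : 0 < r0)
    (hsm_h : ContDiffOn ℝ (⊤ : ℕ∞) uh {(0 : EuclideanSpace ℝ (Fin 2))}ᶜ)
    (hsm_3 : ContDiffOn ℝ (⊤ : ℕ∞) u3 {(0 : EuclideanSpace ℝ (Fin 2))}ᶜ)
    (hbd_h : ∀ x : EuclideanSpace ℝ (Fin 2), ‖x‖ ≤ r0 → ‖uh x‖ ≤ C * ‖x‖ ^ ((1:ℝ)/3))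
    (hbd_3 : ∀ x : EuclideanSpace ℝ (Fin 2), ‖x‖ ≤ r0 → |u3 x| ≤ C * ‖x‖ ^ ((1:ℝ)/3))
    (hgrad_h : ∀ x : EuclideanSpace ℝ (Fin 2), x ≠ 0 → ‖x‖ ≤ r0 →
      ‖fderiv ℝ uh x‖ ≤ C * ‖x‖ ^ (-(2:ℝ)/3))
    (hgrad_3 : ∀ x : EuclideanSpace ℝ (Fin 2), x ≠ 0 → ‖x‖ ≤ r0 →
      ‖fderiv ℝ u3 x‖ ≤ C * ‖x‖ ^ (-(2:ℝ)/3))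
    (hdiv : ∀ x : EuclideanSpace ℝ (Fin 2), x ≠ 0 →
      ∑ i : Fin 2, fderiv ℝ (fun y => uh y i) x (EuclideanSpace.single i 1) = 0)
    (hcpt_h : HasCompactSupport uh) (hcpt_3 : HasCompactSupport u3) :
    (∫ x : EuclideanSpace ℝ (Fin 2),
        (⟪uh x, fderiv ℝ uh x (uh x)⟫ + u3 x * fderiv ℝ u3 x (uh x))) = 0 ∧
    Tendsto (fun ε : ℝ =>
        ∫ x in Metric.sphere (0 : EuclideanSpace ℝ (Fin 2)) ε,
          (1/2) * ⟪uh x, ‖x‖⁻¹ • x⟫ * (‖uh x‖ ^ 2 + (u3 x) ^ 2) ∂(μH[1]))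
      (𝓝[>] 0)
      (𝓝 (∫ x : EuclideanSpace ℝ (Fin 2),
        (⟪uh x, fderiv ℝ uh x (uh x)⟫ + u3 x * fderiv ℝ u3 x (uh x)))) := by
  have h1 : (∫ x : EuclideanSpace ℝ (Fin 2),
      (⟪uh x, fderiv ℝ uh x (uh x)⟫ + u3 x * fderiv ℝ u3 x (uh x))) = 0 := by
    set eL : (EuclideanSpace ℝ (Fin 2)) ≃L[ℝ] (Fin 2 → ℝ) := EuclideanSpace.equiv (Fin 2) ℝ with heL
    set g : EuclideanSpace ℝ (Fin 2) → ℝ :=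
      fun x => ⟪uh x, fderiv ℝ uh x (uh x)⟫ + u3 x * fderiv ℝ u3 x (uh x) with hgdef
    show (∫ x, g x) = 0
    set ee : EuclideanSpace ℝ (Fin 2) → ℝ :=
      fun x => (1/2) * (⟪uh x, uh x⟫ + u3 x * u3 x) with heedef
    set F : EuclideanSpace ℝ (Fin 2) → EuclideanSpace ℝ (Fin 2) :=
      fun x => ee x • uh x with hFdef
    have h13ne : ((1:ℝ)/3) ≠ 0 := by norm_num
    have h0 : uh 0 = 0 := by
      have := hbd_h 0 (by simp [hr0.le])
      rw [norm_zero, Real.zero_rpow h13ne, mul_zero] at this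
      exact norm_le_zero_iff.1 this
    have hg0 : ∀ x, uh x = 0 → g x = 0 := by
      intro x hx; simp [hgdef, hx]
    have hdh : ∀ x : EuclideanSpace ℝ (Fin 2), x ≠ 0 → DifferentiableAt ℝ uh x := fun x hx =>
      (hsm_h.contDiffAt (compl_singleton_mem_nhds hx)).differentiableAt (by simp)
    have hd3 : ∀ x : EuclideanSpace ℝ (Fin 2), x ≠ 0 → DifferentiableAt ℝ u3 x := fun x hx =>
      (hsm_3.contDiffAt (compl_singleton_mem_nhds hx)).differentiableAt (by simp)
    have hde : ∀ x : EuclideanSpace ℝ (Fin 2), x ≠ 0 → DifferentiableAt ℝ ee x := fun x hx =>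
      (((hdh x hx).inner ℝ (hdh x hx)).add ((hd3 x hx).mul (hd3 x hx))).const_mul _
    have hdF : ∀ x : EuclideanSpace ℝ (Fin 2), x ≠ 0 → DifferentiableAt ℝ F x := fun x hx =>
      (hde x hx).smul (hdh x hx)
    -- derivative of `ee` evaluated at `uh x` equals the integrand
    have heed : ∀ x : EuclideanSpace ℝ (Fin 2), x ≠ 0 → fderiv ℝ ee x (uh x) = g x := by
      intro x hx
      have h₁ : fderiv ℝ ee x = (1/2 : ℝ) •
          fderiv ℝ (fun y => (⟪uh y, uh y⟫ + u3 y * u3 y)) x :=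
        fderiv_const_mul (((hdh x hx).inner ℝ (hdh x hx)).add ((hd3 x hx).mul (hd3 x hx))) _
      have h₂ : fderiv ℝ (fun y => (⟪uh y, uh y⟫ + u3 y * u3 y)) x =
          fderiv ℝ (fun y => (⟪uh y, uh y⟫ : ℝ)) x + fderiv ℝ (fun y => u3 y * u3 y) x :=
        fderiv_add ((hdh x hx).inner ℝ (hdh x hx)) ((hd3 x hx).mul (hd3 x hx))
      have h₃ := fderiv_inner_apply ℝ (hdh x hx) (hdh x hx) (uh x)
      have h₄ : fderiv ℝ (fun y => u3 y * u3 y) x =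
          u3 x • fderiv ℝ u3 x + u3 x • fderiv ℝ u3 x := fderiv_mul (hd3 x hx) (hd3 x hx)
      rw [h₁, ContinuousLinearMap.smul_apply, h₂, ContinuousLinearMap.add_apply, h₃, h₄]
      simp only [ContinuousLinearMap.add_apply, ContinuousLinearMap.smul_apply, smul_eq_mul]
      simp only [hgdef]
      rw [real_inner_comm (uh x) ((fderiv ℝ uh x) (uh x))]
      ring
    have hsum_single : ∀ w : EuclideanSpace ℝ (Fin 2),
        ∑ i, w i • EuclideanSpace.single i (1:ℝ) = w := by
      intro w
      have := (EuclideanSpace.basisFun (Fin 2) ℝ).sum_repr w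
      simpa [EuclideanSpace.basisFun_apply, EuclideanSpace.basisFun_repr] using this
    have hfd : ∀ x : EuclideanSpace ℝ (Fin 2), x ≠ 0 →
        fderiv ℝ F x = ee x • fderiv ℝ uh x + (fderiv ℝ ee x).smulRight (uh x) := fun x hx =>
      fderiv_smul (hde x hx) (hdh x hx)
    have hproj : ∀ (i : Fin 2) (x : EuclideanSpace ℝ (Fin 2)), x ≠ 0 →
        fderiv ℝ (fun y => uh y i) x (EuclideanSpace.single i 1) =
          (fderiv ℝ uh x (EuclideanSpace.single i 1)) i := by
      intro i x hx
      have h2 : fderiv ℝ (fun y => uh y i) x =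
          (EuclideanSpace.proj i).comp (fderiv ℝ uh x) :=
        ((EuclideanSpace.proj (𝕜 := ℝ) i).hasFDerivAt.comp x (hdh x hx).hasFDerivAt).fderiv
      rw [h2]; rfl
    have hDFg : ∀ x : EuclideanSpace ℝ (Fin 2), x ≠ 0 →
        (∑ i : Fin 2, ((EuclideanSpace.proj i).comp (fderiv ℝ F x)) (eL.symm (Pi.single i 1)))
          = g x := by
      intro x hx
      have step1 : (∑ i : Fin 2,
          ((EuclideanSpace.proj i).comp (fderiv ℝ F x)) (eL.symm (Pi.single i 1)))
          = ∑ i : Fin 2, (fderiv ℝ F x (EuclideanSpace.single i 1)) i := rfl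
      rw [step1]
      have step2 : ∀ i : Fin 2, (fderiv ℝ F x (EuclideanSpace.single i 1)) i =
          ee x * (fderiv ℝ uh x (EuclideanSpace.single i 1)) i +
            (fderiv ℝ ee x (EuclideanSpace.single i 1)) * (uh x) i := by
        intro i
        rw [hfd x hx]
        simp only [ContinuousLinearMap.add_apply, ContinuousLinearMap.smul_apply,
          ContinuousLinearMap.smulRight_apply]
        rfl
      simp only [step2]
      rw [Finset.sum_add_distrib, ← Finset.mul_sum]
      have hz : (∑ i : Fin 2, (fderiv ℝ uh x (EuclideanSpace.single i 1)) i) = 0 := by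
        rw [← hdiv x hx]
        exact Finset.sum_congr rfl fun i _ => (hproj i x hx).symm
      rw [hz, mul_zero, zero_add]
      have : (∑ i : Fin 2, (fderiv ℝ ee x (EuclideanSpace.single i 1)) * (uh x) i)
          = fderiv ℝ ee x (uh x) := by
        conv_rhs => rw [← hsum_single (uh x), map_sum]
        refine Finset.sum_congr rfl fun i _ => ?_
        rw [_root_.map_smul]
        simp only [smul_eq_mul]
        exact mul_comm _ _
      rw [this, heed x hx]
    -- bound on `g`
    have hgb_small : ∀ x : EuclideanSpace ℝ (Fin 2), x ≠ 0 → ‖x‖ ≤ r0 → |g x| ≤ 2 * C^3 := by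
      intro x hx hxr
      have hpos : (0:ℝ) < ‖x‖ := norm_pos_iff.2 hx
      have hone : ‖x‖ ^ ((1:ℝ)/3) * (‖x‖ ^ (-(2:ℝ)/3) * ‖x‖ ^ ((1:ℝ)/3)) = 1 := by
        rw [← Real.rpow_add hpos, ← Real.rpow_add hpos]
        norm_num
      have hb1 := hbd_h x hxr
      have hb3 := hbd_3 x hxr
      have hgr1 := hgrad_h x hx hxr
      have hgr3 := hgrad_3 x hx hxr
      have ht1 : |(⟪uh x, fderiv ℝ uh x (uh x)⟫ : ℝ)| ≤ C^3 := by
        calc |(⟪uh x, fderiv ℝ uh x (uh x)⟫ : ℝ)|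
            ≤ ‖uh x‖ * ‖fderiv ℝ uh x (uh x)‖ := abs_real_inner_le_norm _ _
          _ ≤ ‖uh x‖ * (‖fderiv ℝ uh x‖ * ‖uh x‖) := by
              apply mul_le_mul_of_nonneg_left ((fderiv ℝ uh x).le_opNorm _) (norm_nonneg _)
          _ ≤ (C * ‖x‖ ^ ((1:ℝ)/3)) * ((C * ‖x‖ ^ (-(2:ℝ)/3)) * (C * ‖x‖ ^ ((1:ℝ)/3))) := by
              apply mul_le_mul hb1 (mul_le_mul hgr1 hb1 (norm_nonneg _) (by positivity))
                (by positivity) (by positivity)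
          _ = C^3 * (‖x‖ ^ ((1:ℝ)/3) * (‖x‖ ^ (-(2:ℝ)/3) * ‖x‖ ^ ((1:ℝ)/3))) := by ring
          _ = C^3 := by rw [hone, mul_one]
      have ht2 : |u3 x * fderiv ℝ u3 x (uh x)| ≤ C^3 := by
        calc |u3 x * fderiv ℝ u3 x (uh x)|
            = |u3 x| * |fderiv ℝ u3 x (uh x)| := abs_mul _ _
          _ ≤ |u3 x| * (‖fderiv ℝ u3 x‖ * ‖uh x‖) := by
              apply mul_le_mul_of_nonneg_left _ (abs_nonneg _)
              exact (fderiv ℝ u3 x).le_opNorm _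
          _ ≤ (C * ‖x‖ ^ ((1:ℝ)/3)) * ((C * ‖x‖ ^ (-(2:ℝ)/3)) * (C * ‖x‖ ^ ((1:ℝ)/3))) := by
              apply mul_le_mul hb3 (mul_le_mul hgr3 hb1 (norm_nonneg _) (by positivity))
                (by positivity) (by positivity)
          _ = C^3 * (‖x‖ ^ ((1:ℝ)/3) * (‖x‖ ^ (-(2:ℝ)/3) * ‖x‖ ^ ((1:ℝ)/3))) := by ring
          _ = C^3 := by rw [hone, mul_one]
      calc |g x| ≤ |(⟪uh x, fderiv ℝ uh x (uh x)⟫ : ℝ)| + |u3 x * fderiv ℝ u3 x (uh x)| :=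
            abs_add_le _ _
        _ ≤ 2 * C^3 := by linarith
    -- continuity of `g` away from the origin
    have hfduh_cont : ContinuousOn (fderiv ℝ uh) {(0:EuclideanSpace ℝ (Fin 2))}ᶜ :=
      hsm_h.continuousOn_fderiv_of_isOpen isOpen_compl_singleton (by simp)
    have hfdu3_cont : ContinuousOn (fderiv ℝ u3) {(0:EuclideanSpace ℝ (Fin 2))}ᶜ :=
      hsm_3.continuousOn_fderiv_of_isOpen isOpen_compl_singleton (by simp)
    have hgcont : ContinuousOn g {(0:EuclideanSpace ℝ (Fin 2))}ᶜ := by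
      apply ContinuousOn.add
      · exact (hsm_h.continuousOn).inner (hfduh_cont.clm_apply hsm_h.continuousOn)
      · exact (hsm_3.continuousOn).mul (hfdu3_cont.clm_apply hsm_h.continuousOn)
    have hrestr : (volume : Measure (EuclideanSpace ℝ (Fin 2))).restrict
        {(0:EuclideanSpace ℝ (Fin 2))}ᶜ = volume := by
      rw [Measure.restrict_congr_set (ae_eq_univ.2 (by simp [measure_singleton])),
        Measure.restrict_univ]
    have hgaesm : AEStronglyMeasurable g (volume : Measure (EuclideanSpace ℝ (Fin 2))) := by
      rw [← hrestr]
      exact hgcont.aestronglyMeasurable isOpen_compl_singleton.measurableSet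
    -- global bound
    obtain ⟨M1, hM1⟩ := (hcpt_h.inter_right
        (isClosed_le continuous_const continuous_norm :
          IsClosed {x : EuclideanSpace ℝ (Fin 2) | r0 ≤ ‖x‖})).exists_bound_of_continuousOn
        (hgcont.mono (fun x hx => by
          simp only [Set.mem_compl_iff, Set.mem_singleton_iff]
          intro h; rw [h] at hx
          have := hx.2; simp only [Set.mem_setOf_eq, norm_zero] at this; linarith))
    set M : ℝ := max (2 * C^3) M1 with hM
    have hgbound : ∀ x : EuclideanSpace ℝ (Fin 2), ‖g x‖ ≤ M := by
      intro x
      rw [Real.norm_eq_abs]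
      by_cases hx0 : x = 0
      · rw [hx0, hg0 0 h0, abs_zero]
        exact le_trans (by positivity) (le_max_left _ _)
      by_cases hxr : ‖x‖ ≤ r0
      · exact le_trans (hgb_small x hx0 hxr) (le_max_left _ _)
      by_cases hxs : x ∈ tsupport uh
      · refine le_trans ?_ (le_max_right _ _)
        have := hM1 x ⟨hxs, by simp only [Set.mem_setOf_eq]; linarith⟩
        rwa [Real.norm_eq_abs] at this
      · rw [hg0 x (image_eq_zero_of_notMem_tsupport hxs), abs_zero]
        exact le_trans (by positivity) (le_max_left _ _)
    -- the big box
    obtain ⟨R, hR⟩ := hcpt_h.isBounded.subset_closedBall (0 : EuclideanSpace ℝ (Fin 2))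
    set R' : ℝ := |R| + 1 with hR'
    have hRR' : R < R' := lt_of_le_of_lt (le_abs_self R) (by simp [hR'])
    have hR'pos : (0:ℝ) < R' := by positivity
    have huh_zero : ∀ y : EuclideanSpace ℝ (Fin 2), R < ‖y‖ → uh y = 0 := by
      intro y hy
      apply image_eq_zero_of_notMem_tsupport
      intro hm
      have := hR hm
      rw [Metric.mem_closedBall, dist_zero_right] at this
      linarith
    have hFzero : ∀ y : EuclideanSpace ℝ (Fin 2), R < ‖y‖ → F y = 0 := by
      intro y hy; simp only [hFdef]; rw [huh_zero y hy, smul_zero]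
    set a : EuclideanSpace ℝ (Fin 2) := eL.symm (fun _ => -R') with ha
    set b : EuclideanSpace ℝ (Fin 2) := eL.symm (fun _ => R') with hb
    have hab : a ≤ b := fun i => by
      show -R' ≤ R'
      linarith
    -- continuity of F
    have hFcont : Continuous F := by
      rw [continuous_iff_continuousAt]
      intro x
      by_cases hx : x = 0
      · rw [hx]
        have hF0 : F 0 = 0 := by simp only [hFdef]; rw [h0, smul_zero]
        unfold ContinuousAt
        rw [hF0]
        apply squeeze_zero_norm' (a := fun y : EuclideanSpace ℝ (Fin 2) => C^3 * ‖y‖)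
        · filter_upwards [Metric.closedBall_mem_nhds (0 : EuclideanSpace ℝ (Fin 2)) hr0]
            with y hy
          rw [Metric.mem_closedBall, dist_zero_right] at hy
          have hb1 := hbd_h y hy
          have hb3 := hbd_3 y hy
          have hcube : ‖y‖ ^ ((1:ℝ)/3) * (‖y‖ ^ ((1:ℝ)/3))^2 = ‖y‖ := by
            rw [← Real.rpow_natCast (‖y‖ ^ ((1:ℝ)/3)) 2, ← Real.rpow_mul (norm_nonneg y),
              ← Real.rpow_add' (norm_nonneg y) (by norm_num)]
            norm_num
          have hee_bd : |ee y| ≤ (C * ‖y‖ ^ ((1:ℝ)/3))^2 := by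
            simp only [heedef]
            rw [abs_mul]
            have h1 : |(⟪uh y, uh y⟫ : ℝ) + u3 y * u3 y| ≤ 2 * (C * ‖y‖ ^ ((1:ℝ)/3))^2 := by
              rw [real_inner_self_eq_norm_sq]
              have e1 : ‖uh y‖^2 ≤ (C * ‖y‖ ^ ((1:ℝ)/3))^2 :=
                pow_le_pow_left₀ (norm_nonneg _) hb1 2
              have e2 : u3 y * u3 y ≤ (C * ‖y‖ ^ ((1:ℝ)/3))^2 := by
                rw [← sq, ← sq_abs]
                exact pow_le_pow_left₀ (abs_nonneg _) hb3 2
              have e3 : (0:ℝ) ≤ ‖uh y‖^2 := by positivity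
              have e4 : (0:ℝ) ≤ u3 y * u3 y := mul_self_nonneg _
              rw [abs_of_nonneg (by linarith)]
              linarith
            calc |(1:ℝ)/2| * |(⟪uh y, uh y⟫ : ℝ) + u3 y * u3 y|
                = (1/2) * |(⟪uh y, uh y⟫ : ℝ) + u3 y * u3 y| := by norm_num
              _ ≤ (1/2) * (2 * (C * ‖y‖ ^ ((1:ℝ)/3))^2) :=
                  mul_le_mul_of_nonneg_left h1 (by norm_num)
              _ = (C * ‖y‖ ^ ((1:ℝ)/3))^2 := by ring
          calc ‖F y‖ = |ee y| * ‖uh y‖ := by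
                simp only [hFdef]; rw [norm_smul, Real.norm_eq_abs]
            _ ≤ (C * ‖y‖ ^ ((1:ℝ)/3))^2 * (C * ‖y‖ ^ ((1:ℝ)/3)) := by
                apply mul_le_mul hee_bd hb1 (norm_nonneg _) (by positivity)
            _ = C^3 * (‖y‖ ^ ((1:ℝ)/3) * (‖y‖ ^ ((1:ℝ)/3))^2) := by ring
            _ = C^3 * ‖y‖ := by rw [hcube]
        · have : Continuous (fun y : EuclideanSpace ℝ (Fin 2) => C^3 * ‖y‖) :=
            continuous_const.mul continuous_norm
          have := this.tendsto 0
          simpa using this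
      · have hco : ContinuousOn F {(0:EuclideanSpace ℝ (Fin 2))}ᶜ := by
          apply ContinuousOn.fun_smul
          · exact continuousOn_const.mul
              ((hsm_h.continuousOn.inner hsm_h.continuousOn).add
                (hsm_3.continuousOn.mul hsm_3.continuousOn))
          · exact hsm_h.continuousOn
        exact hco.continuousAt (isOpen_compl_singleton.mem_nhds hx)
    -- apply the divergence theorem
    have he_vol : MeasurePreserving (⇑eL) volume volume :=
      PiLp.volume_preserving_ofLp (Fin 2)
    have hIccball : Set.Icc a b ⊆ Metric.closedBall (0 : EuclideanSpace ℝ (Fin 2)) (2 * R') := by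
      intro x hx
      rw [Set.mem_Icc] at hx
      rw [Metric.mem_closedBall, dist_zero_right]
      have hcoord : ∀ i : Fin 2, |x i| ≤ R' := by
        intro i
        have l1 : -R' ≤ x i := hx.1 i
        have l2 : x i ≤ R' := hx.2 i
        rw [abs_le]; exact ⟨l1, l2⟩
      rw [EuclideanSpace.norm_eq]
      have : ∑ i : Fin 2, ‖x i‖^2 ≤ (2 * R')^2 := by
        rw [Fin.sum_univ_two]
        have e0 := hcoord 0
        have e1 := hcoord 1
        have f0 : ‖x 0‖^2 ≤ R'^2 := by
          rw [Real.norm_eq_abs, ← sq_abs R']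
          apply pow_le_pow_left₀ (abs_nonneg _) (le_trans e0 (le_abs_self R')) 2
        have f1 : ‖x 1‖^2 ≤ R'^2 := by
          rw [Real.norm_eq_abs, ← sq_abs R']
          apply pow_le_pow_left₀ (abs_nonneg _) (le_trans e1 (le_abs_self R')) 2
        nlinarith
      calc Real.sqrt (∑ i : Fin 2, ‖x i‖^2) ≤ Real.sqrt ((2 * R')^2) :=
            Real.sqrt_le_sqrt this
        _ = 2 * R' := Real.sqrt_sq (by positivity)
    have hIccfin : volume (Set.Icc a b) < ⊤ :=
      lt_of_le_of_lt (measure_mono hIccball) measure_closedBall_lt_top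
    have hIg : IntegrableOn g (Set.Icc a b) volume := by
      apply Integrable.mono' (g := fun _ => M)
      · exact integrableOn_const hIccfin.ne
      · exact hgaesm.restrict
      · exact Filter.Eventually.of_forall hgbound
    have hDFae : (fun x => ∑ i : Fin 2,
        ((EuclideanSpace.proj i).comp (fderiv ℝ F x)) (eL.symm (Pi.single i 1)))
          =ᵐ[volume.restrict (Set.Icc a b)] g := by
      apply ae_restrict_of_ae
      have hsub : {x : EuclideanSpace ℝ (Fin 2) | ¬ (∑ i : Fin 2,
          ((EuclideanSpace.proj i).comp (fderiv ℝ F x)) (eL.symm (Pi.single i 1))) = g x}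
            ⊆ {0} := by
        intro x hx
        simp only [Set.mem_setOf_eq] at hx
        by_contra hne
        simp only [Set.mem_singleton_iff] at hne
        exact hx (hDFg x hne)
      exact measure_mono_null hsub (measure_singleton 0)
    have hInt : IntegrableOn (fun x => ∑ i : Fin 2,
        ((EuclideanSpace.proj i).comp (fderiv ℝ F x)) (eL.symm (Pi.single i 1)))
          (Set.Icc a b) volume := hIg.congr hDFae.symm
    have hdt := integral_divergence_of_hasFDerivAt_off_countable_of_equiv eL
      (fun x y => Iff.rfl) he_vol
      (fun i x => F x i)
      (fun i x => (EuclideanSpace.proj i).comp (fderiv ℝ F x))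
      {0} (Set.countable_singleton 0) a b hab
      (fun i => ((EuclideanSpace.proj (𝕜 := ℝ) i).continuous.comp hFcont).continuousOn)
      (fun x hx i => ((EuclideanSpace.proj (𝕜 := ℝ) i).hasFDerivAt.comp x
        (hdF x (by simpa using hx.2)).hasFDerivAt))
      (fun x => ∑ i : Fin 2,
        ((EuclideanSpace.proj i).comp (fderiv ℝ F x)) (eL.symm (Pi.single i 1)))
      (fun x => rfl) hInt
    -- the boundary terms vanish
    have hface : ∀ (i : Fin 2) (c : ℝ), R < |c| → ∀ z : Fin 1 → ℝ,
        F (eL.symm (i.insertNth c z)) = 0 := by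
      intro i c hc z
      apply hFzero
      have hval : (eL.symm (i.insertNth c z) : EuclideanSpace ℝ (Fin 2)) i = c := by
        have h' : Fin.insertNth (α := fun _ : Fin 2 => ℝ) i c z i = c :=
          Fin.insertNth_apply_same (α := fun _ : Fin 2 => ℝ) i c z
        exact h'
      calc R < |c| := hc
        _ = |(eL.symm (i.insertNth c z) : EuclideanSpace ℝ (Fin 2)) i| := by rw [hval]
        _ ≤ ‖(eL.symm (i.insertNth c z) : EuclideanSpace ℝ (Fin 2))‖ :=
            Stmt5Aux.coord_le_norm _ i
    have hrhs : (∑ i : Fin 2,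
        ((∫ x in Set.Icc (eL a ∘ i.succAbove) (eL b ∘ i.succAbove),
            F (eL.symm (i.insertNth (eL b i) x)) i) -
          ∫ x in Set.Icc (eL a ∘ i.succAbove) (eL b ∘ i.succAbove),
            F (eL.symm (i.insertNth (eL a i) x)) i)) = 0 := by
      apply Finset.sum_eq_zero
      intro i _
      have hbi : eL b i = R' := by rw [hb]; rw [eL.apply_symm_apply]
      have hai : eL a i = -R' := by rw [ha]; rw [eL.apply_symm_apply]
      have habs : R < |R'| := by rw [abs_of_pos hR'pos]; exact hRR'
      have habs' : R < |-R'| := by rw [abs_neg, abs_of_pos hR'pos]; exact hRR'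
      have hz1 : ∀ z : Fin 1 → ℝ, F (eL.symm (i.insertNth (eL b i) z)) i = 0 := by
        intro z; rw [hbi, hface i R' habs z]; rfl
      have hz2 : ∀ z : Fin 1 → ℝ, F (eL.symm (i.insertNth (eL a i) z)) i = 0 := by
        intro z; rw [hai, hface i (-R') habs' z]; rfl
      rw [show (fun x => F (eL.symm (i.insertNth (eL b i) x)) i) = fun _ => (0:ℝ) from
          funext hz1,
        show (fun x => F (eL.symm (i.insertNth (eL a i) x)) i) = fun _ => (0:ℝ) from
          funext hz2]
      simp
    rw [hrhs] at hdt
    -- put everything together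
    have hIcceq : (∫ x in Set.Icc a b, g x) = 0 := by
      rw [← integral_congr_ae hDFae]
      exact hdt
    rw [← setIntegral_eq_integral_of_forall_compl_eq_zero (s := Set.Icc a b) (fun x hx => ?_)]
    · exact hIcceq
    · -- x outside the box implies g x = 0
      apply hg0
      apply huh_zero
      by_contra hle
      push_neg at hle
      apply hx
      rw [Set.mem_Icc]
      constructor
      · intro i
        show -R' ≤ x i
        have := Stmt5Aux.coord_le_norm x i
        have h2 : |x i| ≤ R' := le_trans this (by linarith)
        linarith [abs_le.1 h2 |>.1]
      · intro i
        show x i ≤ R'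
        have := Stmt5Aux.coord_le_norm x i
        have h2 : |x i| ≤ R' := le_trans this (by linarith)
        exact abs_le.1 h2 |>.2

  refine ⟨h1, ?_⟩
  rw [h1]
  apply squeeze_zero_norm'
  · filter_upwards [Ioo_mem_nhdsGT_of_mem (Set.mem_Ico.2 ⟨le_refl (0:ℝ), hr0⟩)] with ε hε
    obtain ⟨hε0, hεr0⟩ := hε
    -- bound the integrand on the sphere
    have hsph : ∀ x ∈ Metric.sphere (0 : E2) ε,
        ‖(1/2) * ⟪uh x, ‖x‖⁻¹ • x⟫ * (‖uh x‖ ^ 2 + (u3 x) ^ 2)‖ ≤ C^3 * ε := by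
      intro x hx
      have hxn : ‖x‖ = ε := by simpa [dist_zero_right] using hx
      have hxne : x ≠ 0 := by
        intro h; rw [h] at hxn; simp at hxn; exact absurd hxn.symm (ne_of_gt hε0)
      have hb1 : ‖uh x‖ ≤ C * ε ^ ((1:ℝ)/3) := by
        have := hbd_h x (by rw [hxn]; exact hεr0.le); rwa [hxn] at this
      have hb3 : |u3 x| ≤ C * ε ^ ((1:ℝ)/3) := by
        have := hbd_3 x (by rw [hxn]; exact hεr0.le); rwa [hxn] at this
      have hinner : |⟪uh x, ‖x‖⁻¹ • x⟫| ≤ ‖uh x‖ := by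
        calc |⟪uh x, ‖x‖⁻¹ • x⟫| ≤ ‖uh x‖ * ‖‖x‖⁻¹ • x‖ := abs_real_inner_le_norm _ _
          _ = ‖uh x‖ := by
            rw [norm_smul, Real.norm_eq_abs, abs_inv, abs_norm, hxn,
              inv_mul_cancel₀ (ne_of_gt hε0), mul_one]
      have hsq : ‖uh x‖ ^ 2 + (u3 x) ^ 2 ≤ 2 * (C * ε ^ ((1:ℝ)/3))^2 := by
        have h1' : ‖uh x‖ ^ 2 ≤ (C * ε ^ ((1:ℝ)/3))^2 := by
          apply pow_le_pow_left₀ (norm_nonneg _) hb1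
        have h2' : (u3 x) ^ 2 ≤ (C * ε ^ ((1:ℝ)/3))^2 := by
          rw [← sq_abs]; apply pow_le_pow_left₀ (abs_nonneg _) hb3
        linarith
      have hCε : (0:ℝ) ≤ C * ε ^ ((1:ℝ)/3) := by positivity
      calc ‖(1/2) * ⟪uh x, ‖x‖⁻¹ • x⟫ * (‖uh x‖ ^ 2 + (u3 x) ^ 2)‖
          = (1/2) * |⟪uh x, ‖x‖⁻¹ • x⟫| * (‖uh x‖ ^ 2 + (u3 x) ^ 2) := by
            rw [Real.norm_eq_abs, abs_mul, abs_mul]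
            have : |(1:ℝ)/2| = 1/2 := by norm_num
            rw [this, abs_of_nonneg (by positivity : (0:ℝ) ≤ ‖uh x‖ ^ 2 + (u3 x) ^ 2)]
        _ ≤ (1/2) * (C * ε ^ ((1:ℝ)/3)) * (2 * (C * ε ^ ((1:ℝ)/3))^2) := by
            apply mul_le_mul
            · apply mul_le_mul_of_nonneg_left (hinner.trans hb1) (by norm_num)
            · exact hsq
            · positivity
            · positivity
        _ = C^3 * (ε ^ ((1:ℝ)/3) * (ε ^ ((1:ℝ)/3))^2) := by ring
        _ = C^3 * ε := by
            congr 1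
            rw [← Real.rpow_natCast (ε ^ ((1:ℝ)/3)) 2, ← Real.rpow_mul hε0.le,
              ← Real.rpow_add hε0]
            norm_num
    have hmeas : μH[1] (Metric.sphere (0 : E2) ε) < ⊤ :=
      lt_of_le_of_lt (Stmt5Aux.sphere_haus_le ε hε0.le) ENNReal.ofReal_lt_top
    have haesm : AEStronglyMeasurable
        (fun x : E2 => (1/2) * ⟪uh x, ‖x‖⁻¹ • x⟫ * (‖uh x‖ ^ 2 + (u3 x) ^ 2))
        ((μH[1]).restrict (Metric.sphere (0 : E2) ε)) := by
      apply ContinuousOn.aestronglyMeasurable _ (Metric.isClosed_sphere.measurableSet)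
      have hsub : Metric.sphere (0 : E2) ε ⊆ {(0:E2)}ᶜ := by
        intro x hx
        simp only [Set.mem_compl_iff, Set.mem_singleton_iff]
        intro h
        rw [h] at hx
        simp [hε0.ne'] at hx
        exact absurd hx.symm (ne_of_gt hε0)
      have hcu : ContinuousOn uh (Metric.sphere (0 : E2) ε) :=
        (hsm_h.continuousOn).mono hsub
      have hc3 : ContinuousOn u3 (Metric.sphere (0 : E2) ε) :=
        (hsm_3.continuousOn).mono hsub
      have hcn : ContinuousOn (fun x : E2 => ‖x‖⁻¹ • x) (Metric.sphere (0 : E2) ε) := by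
        apply ContinuousOn.fun_smul _ continuousOn_id
        apply ContinuousOn.inv₀ (continuous_norm.continuousOn)
        intro x hx
        have := hsub hx
        simp only [Set.mem_compl_iff, Set.mem_singleton_iff] at this
        exact norm_ne_zero_iff.2 this
      exact (continuousOn_const.mul (hcu.inner hcn)).mul
        (((continuous_norm.continuousOn.comp hcu (Set.mapsTo_image _ _)).pow 2).add
          (hc3.pow 2))
    have := norm_setIntegral_le_of_norm_le_const hmeas hsph
    calc ‖∫ x in Metric.sphere (0 : E2) ε,
          (1/2) * ⟪uh x, ‖x‖⁻¹ • x⟫ * (‖uh x‖ ^ 2 + (u3 x) ^ 2) ∂(μH[1])‖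
        ≤ C^3 * ε * (μH[1] (Metric.sphere (0 : E2) ε)).toReal := this
      _ ≤ C^3 * ε * (ε * (2 * π)) := by
          apply mul_le_mul_of_nonneg_left _ (by positivity)
          calc (μH[1] (Metric.sphere (0 : E2) ε)).toReal
              ≤ (ENNReal.ofReal (ε * (2 * π))).toReal := by
                apply ENNReal.toReal_mono ENNReal.ofReal_ne_top (Stmt5Aux.sphere_haus_le ε hε0.le)
            _ = ε * (2 * π) := ENNReal.toReal_ofReal (by positivity)
  · have hcont : Continuous (fun ε : ℝ => C^3 * ε * (ε * (2 * π))) := by continuity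
    have ht := (hcont.tendsto 0).mono_left (nhdsWithin_le_nhds (s := Set.Ioi (0:ℝ)))
    simpa using ht

end
end

section
/- Suppose continuous functions a, b, w : [0,T] → ℝ satisfy a(t) ≥ A > 0, |b(t)| ≤ A/10, |w(t)| ≤ W, and additionally a(t) ≥ 4(|b(t)| + 1) and |w(t)| ≤ 1 for all t, and consider the ODE system P'(t) = a(t)P(t) + b(t)Q(t), Q'(t) = -a(t)Q(t) + (b(t) + w(t))P(t) with P(0) = 1, Q(0) = 0. Then P(t) > 4|Q(t)| for all t ∈ [0,T], and consequently P(t) ≥ exp((3/4)∫₀^t a(s) ds) ≥ exp(3At/4). -/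
open Real Set

/-- ODE lemma for stretching of the Jacobian entry along a trajectory:
`P ' = aP + bQ`, `Q' = -aQ + (b+w)P` with `a ≥ A > 0`, `|b| ≤ A/10`, `a ≥ 4(|b|+1)`,
`|w| ≤ W`, `|w| ≤ 1`, `P(0)=1`, `Q(0)=0` imply `P > 4|Q|` and exponential growth of `P`. -/
theorem stmt7 (T A W : ℝ) (hT : 0 < T) (hA : 0 < A)
    (a b w P Q : ℝ → ℝ)
    (ha : Continuous a) (hb : Continuous b) (hw : Continuous w)
    (haA : ∀ t ∈ Icc 0 T, A ≤ a t)
    (hbA : ∀ t ∈ Icc 0 T, |b t| ≤ A / 10)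
    (ha4 : ∀ t ∈ Icc 0 T, 4 * (|b t| + 1) ≤ a t)
    (hwW : ∀ t ∈ Icc 0 T, |w t| ≤ W)
    (hw1 : ∀ t ∈ Icc 0 T, |w t| ≤ 1)
    (hP : ∀ t ∈ Icc 0 T, HasDerivAt P (a t * P t + b t * Q t) t)
    (hQ : ∀ t ∈ Icc 0 T, HasDerivAt Q (-(a t) * Q t + (b t + w t) * P t) t)
    (hP0 : P 0 = 1) (hQ0 : Q 0 = 0) :
    ∀ t ∈ Icc 0 T, 4 * |Q t| < P t ∧
      Real.exp ((3/4) * ∫ s in (0:ℝ)..t, a s) ≤ P t ∧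
      Real.exp (3 * A * t / 4) ≤ Real.exp ((3/4) * ∫ s in (0:ℝ)..t, a s) := by
  have h0T : (0:ℝ) ∈ Icc (0:ℝ) T := ⟨le_refl _, hT.le⟩
  -- continuity of P, Q on [0,T]
  have hPc : ContinuousOn P (Icc 0 T) := fun t ht => ((hP t ht).continuousAt).continuousWithinAt
  have hQc : ContinuousOn Q (Icc 0 T) := fun t ht => ((hQ t ht).continuousAt).continuousWithinAt
  -- g = P^2 - 16 Q^2 is monotone nondecreasing
  set g : ℝ → ℝ := fun t => P t ^ 2 - 16 * Q t ^ 2 with hgdef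
  have hg : ∀ t ∈ Icc 0 T, HasDerivAt g
      ((2 * P t ^ 1) * (a t * P t + b t * Q t)
        - 16 * ((2 * Q t ^ 1) * (-(a t) * Q t + (b t + w t) * P t))) t := by
    intro t ht
    exact ((hP t ht).pow 2).sub (((hQ t ht).pow 2).const_mul 16)
  have hderiv_nonneg : ∀ t ∈ Icc 0 T,
      0 ≤ (2 * P t ^ 1) * (a t * P t + b t * Q t)
        - 16 * ((2 * Q t ^ 1) * (-(a t) * Q t + (b t + w t) * P t)) := by
    intro t ht
    have h4 := ha4 t ht
    have hw' := abs_le.1 (hw1 t ht)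
    have hB : (0:ℝ) ≤ |b t| := abs_nonneg _
    have hb1 : b t ≤ |b t| := le_abs_self _
    have hb2 : -|b t| ≤ b t := neg_abs_le _
    set p := P t; set q := Q t; set B := |b t|
    have S1 : (0:ℝ) ≤ (p - 4*q)^2 := sq_nonneg _
    have S2 : (0:ℝ) ≤ (p + 4*q)^2 := sq_nonneg _
    nlinarith [mul_nonneg (sub_nonneg.2 hb1) S2, mul_nonneg (sub_nonneg.2 hb2) S1,
      mul_nonneg (sub_nonneg.2 hw'.2) S2, mul_nonneg (sub_nonneg.2 (neg_le.1 hw'.1)) S1,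
      mul_nonneg hB (add_nonneg S1 S2), mul_nonneg (by linarith : (0:ℝ) ≤ a t - 4*B - 4) (add_nonneg S1 S2),
      S1, S2]
  have hgc : ContinuousOn g (Icc 0 T) := fun t ht => ((hg t ht).continuousAt).continuousWithinAt
  have hmono : MonotoneOn g (Icc 0 T) := by
    apply monotoneOn_of_deriv_nonneg (convex_Icc 0 T) hgc
    · intro x hx
      rw [interior_Icc] at hx
      exact ((hg x (Ioo_subset_Icc_self hx)).differentiableAt).differentiableWithinAt
    · intro x hx
      rw [interior_Icc] at hx
      rw [(hg x (Ioo_subset_Icc_self hx)).deriv]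
      exact hderiv_nonneg x (Ioo_subset_Icc_self hx)
  have hg0 : g 0 = 1 := by simp [hgdef, hP0, hQ0]
  have hg1 : ∀ t ∈ Icc 0 T, 1 ≤ g t := by
    intro t ht
    have := hmono h0T ht ht.1
    rwa [hg0] at this
  -- P > 0 on [0,T]
  have hPpos : ∀ t ∈ Icc 0 T, 0 < P t := by
    intro t ht
    by_contra h
    push_neg at h
    have hPne : ∀ s ∈ Icc (0:ℝ) t, P s ≠ 0 := by
      intro s hs h0
      have hs' : s ∈ Icc (0:ℝ) T := ⟨hs.1, hs.2.trans ht.2⟩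
      have := hg1 s hs'
      simp only [hgdef, h0] at this
      nlinarith [sq_nonneg (Q s)]
    have hPt : P t < 0 := lt_of_le_of_ne h (hPne t ⟨ht.1, le_refl _⟩)
    have hsub : Icc (0:ℝ) t ⊆ Icc (0:ℝ) T := Icc_subset_Icc (le_refl _) ht.2
    have hivt := intermediate_value_Icc' ht.1 (hPc.mono hsub)
    have : (0:ℝ) ∈ Icc (P t) (P 0) := ⟨hPt.le, by rw [hP0]; norm_num⟩
    obtain ⟨s, hs, hPs⟩ := hivt this
    exact hPne s hs hPs
  -- P > 4|Q|
  have hPQ : ∀ t ∈ Icc 0 T, 4 * |Q t| < P t := by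
    intro t ht
    have h1 := hg1 t ht
    have h2 := hPpos t ht
    have h1' : 1 ≤ P t ^ 2 - 16 * Q t ^ 2 := h1
    nlinarith [abs_nonneg (Q t), sq_abs (Q t)]
  -- F = ∫₀ᵗ a, has derivative a t
  have hF : ∀ t : ℝ, HasDerivAt (fun u => ∫ s in (0:ℝ)..u, a s) (a t) t := by
    intro t
    exact intervalIntegral.integral_hasDerivAt_right (ha.intervalIntegrable _ _)
      (ha.aestronglyMeasurable.stronglyMeasurableAtFilter) ha.continuousAt
  set F : ℝ → ℝ := fun u => ∫ s in (0:ℝ)..u, a s with hFdef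
  -- h = P * exp(-(3/4) F) is monotone
  set h : ℝ → ℝ := fun t => P t * Real.exp (-(3/4) * F t) with hhdef
  have hh : ∀ t ∈ Icc 0 T, HasDerivAt h
      ((a t * P t + b t * Q t) * Real.exp (-(3/4) * F t)
        + P t * (Real.exp (-(3/4) * F t) * (-(3/4) * a t))) t := by
    intro t ht
    exact (hP t ht).mul (((hF t).const_mul (-(3/4))).exp)
  have hhderiv_nonneg : ∀ t ∈ Icc 0 T,
      0 ≤ (a t * P t + b t * Q t) * Real.exp (-(3/4) * F t)
        + P t * (Real.exp (-(3/4) * F t) * (-(3/4) * a t)) := by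
    intro t ht
    have hE : 0 < Real.exp (-(3/4) * F t) := Real.exp_pos _
    have h4 := ha4 t ht
    have hPQt := hPQ t ht
    have hPp := hPpos t ht
    have hB : (0:ℝ) ≤ |b t| := abs_nonneg _
    have hQa : |Q t| < P t / 4 := by linarith
    have hbQ : b t * Q t ≥ -(|b t| * (P t / 4)) := by
      have : |b t * Q t| ≤ |b t| * (P t / 4) := by
        rw [abs_mul]
        exact mul_le_mul_of_nonneg_left hQa.le hB
      linarith [neg_abs_le (b t * Q t)]
    have key : (3/4) * a t * P t ≤ a t * P t + b t * Q t := by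
      nlinarith [mul_nonneg hB hPp.le]
    have := mul_le_mul_of_nonneg_right key hE.le
    nlinarith
  have hhc : ContinuousOn h (Icc 0 T) := fun t ht => ((hh t ht).continuousAt).continuousWithinAt
  have hhmono : MonotoneOn h (Icc 0 T) := by
    apply monotoneOn_of_deriv_nonneg (convex_Icc 0 T) hhc
    · intro x hx
      rw [interior_Icc] at hx
      exact ((hh x (Ioo_subset_Icc_self hx)).differentiableAt).differentiableWithinAt
    · intro x hx
      rw [interior_Icc] at hx
      rw [(hh x (Ioo_subset_Icc_self hx)).deriv]
      exact hhderiv_nonneg x (Ioo_subset_Icc_self hx)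
  have hF0 : F 0 = 0 := by simp [hFdef]
  have hh0 : h 0 = 1 := by simp [hhdef, hP0, hF0]
  -- conclusion
  intro t ht
  refine ⟨hPQ t ht, ?_, ?_⟩
  · have hmt := hhmono h0T ht ht.1
    rw [hh0] at hmt
    have : Real.exp ((3/4) * F t) * 1 ≤ Real.exp ((3/4) * F t) * h t :=
      mul_le_mul_of_nonneg_left hmt (Real.exp_pos _).le
    calc Real.exp ((3/4) * F t) = Real.exp ((3/4) * F t) * 1 := by ring
      _ ≤ Real.exp ((3/4) * F t) * (P t * Real.exp (-(3/4) * F t)) := this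
      _ = P t * Real.exp ((3/4) * F t + (-(3/4) * F t)) := by
          rw [Real.exp_add]; ring
      _ = P t := by rw [show (3/4) * F t + (-(3/4) * F t) = 0 by ring, Real.exp_zero, mul_one]
  · apply Real.exp_le_exp.2
    have hInt : A * t ≤ ∫ s in (0:ℝ)..t, a s := by
      have : ∫ s in (0:ℝ)..t, A ≤ ∫ s in (0:ℝ)..t, a s := by
        apply intervalIntegral.integral_mono_on ht.1
          (intervalIntegrable_const) (ha.intervalIntegrable _ _)
        intro s hs
        exact haA s ⟨hs.1, hs.2.trans ht.2⟩
      simpa [mul_comm] using this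
    nlinarith [hInt]
end
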